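/- (i) Let g = gcd(m, n+1). Then for every integer k with 1 ≤ k ≤ g−1, the number 2t cos(πk/g) is an eigenvalue of H, regardless of the values of the complex defect potentials z_m and z_{m̄}. (ii) If moreover z_{m̄} = −z_m, then, with g' = gcd(2m, n+1), for every integer k with 1 ≤ k ≤ g'−1 the number 2t cos(πk/g') is an eigenvalue of H. -/

import Mathlib

open Matrix Complex Polynomial

/-- The uniform `n`-site open chain with hopping `t` and defect potentials
`zm` at site `m` and `zmb` at the mirror site `m̄ = n+1−m` (1-based sites). -/
noncomputable def Hu (n m : ℕ) (t : ℝ) (zm zmb : ℂ) : Matrix (Fin n) (Fin n) ℂ :=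
  fun i j =>
    if (i : ℕ) = (j : ℕ) then
      (if (i : ℕ) + 1 = m then zm else if (i : ℕ) + 1 = n + 1 - m then zmb else 0)
    else if (i : ℕ) + 1 = (j : ℕ) ∨ (j : ℕ) + 1 = (i : ℕ) then (t : ℂ)
    else 0

/-!
A sequence `W` with `W 0 = W (n + 1) = 0`, `W 1 ≠ 0`, solving
`t (W (j - 1) + W (j + 1)) + V j * W j = μ * W j` at the sites `1 ≤ j ≤ n`, where `V` is the
defect potential, gives the eigenvector `(W 1, …, W n)` of `Hu` for `μ`. For `μ = 2 t cos θ` the sine wave `j ↦ sin (j θ)` solves the defect-free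
recurrence, and it vanishes at `n + 1` once `θ (n + 1) ∈ π ℤ`.

(i) If also `θ m ∈ π ℤ`, the sine wave vanishes at `m` and at `m̄ = n + 1 - m`, so it does not
see the defects at all.

(ii) In general, add a multiple `c` of the sine wave started at `m`, chosen to absorb the defect
`z` there, and `ε c` of the one started at `m̄`, where `ε = cos (θ (n + 1)) = ±1`. When
`2 θ m ∈ π ℤ` the wave started at `m` vanishes at `m̄`, so with the opposite potential `-z` at
`m̄` the second defect is absorbed as well, and the two kinked waves cancel at `n + 1`.
-/

theorem Matrix.mem_spectrum_of_mulVec_eq_smul {ι K : Type*} [Fintype ι] [DecidableEq ι]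
    [Field K] {A : Matrix ι ι K} {μ : K} {v : ι → K} (hv : v ≠ 0) (h : A *ᵥ v = μ • v) :
    μ ∈ spectrum K A :=
  spectrum_toLin' A ▸ Module.End.HasEigenvalue.mem_spectrum
    (Module.End.hasEigenvalue_of_hasEigenvector ⟨Module.End.mem_eigenspace_iff.mpr h, hv⟩)

theorem Fin.sum_ite_val_eq {M : Type*} [AddCommMonoid M] (n c : ℕ) (f : ℕ → M) :
    ∑ j : Fin n, (if (j : ℕ) = c then f j else 0) = if c < n then f c else 0 := by
  rw [Fin.sum_univ_eq_sum_range (fun j => if j = c then f j else 0), Finset.sum_ite_eq']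
  simp

section Chain

variable {n m : ℕ} {t : ℝ} {zm zmb : ℂ}

theorem Hu_apply (i j : Fin n) :
    Hu n m t zm zmb i j = (if j = i then Hu n m t zm zmb i i else 0) +
      (if (j : ℕ) = i + 1 then (t : ℂ) else 0) + (if (j : ℕ) + 1 = i then (t : ℂ) else 0) := by
  simp only [Hu, Fin.ext_iff]
  split_ifs <;> first | ring1 | (exfalso; omega)

theorem Hu_mulVec (V : ℕ → ℂ) (h0 : V 0 = 0) (hend : V (n + 1) = 0) (i : Fin n) :
    (Hu n m t zm zmb *ᵥ fun j => V (j + 1)) i =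
      t * (V i + V (i + 2)) + Hu n m t zm zmb i i * V (i + 1) := by
  have right :
      (∑ j : Fin n, if (j : ℕ) = i + 1 then (t : ℂ) * V (j + 1) else 0) = t * V (i + 2) := by
    rw [Fin.sum_ite_val_eq _ _ (fun j => (t : ℂ) * V (j + 1))]
    split_ifs with h
    · rfl
    · rw [show (i : ℕ) + 2 = n + 1 by omega, hend, mul_zero]
  have left : (∑ j : Fin n, if (j : ℕ) + 1 = i then (t : ℂ) * V (j + 1) else 0) = t * V i := by
    obtain ⟨_ | i, hi⟩ := i
    · simp [h0]
    · simp only [add_left_inj]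
      rw [Fin.sum_ite_val_eq _ _ (fun j => (t : ℂ) * V (j + 1)), if_pos (by omega)]
  simp only [mulVec, dotProduct]
  rw [Finset.sum_congr rfl fun (j : Fin n) _ => congrArg (· * V (j + 1)) (Hu_apply i j)]
  simp only [add_mul, ite_mul, zero_mul, Finset.sum_add_distrib,
    Finset.sum_ite_eq', Finset.mem_univ, if_true, right, left]
  ring

theorem Hu_apply_self (i : Fin n) :
    Hu n m t zm zmb i i =
      if (i : ℕ) + 1 = m then zm else if (i : ℕ) + 1 = n + 1 - m then zmb else 0 :=
  if_pos rfl

theorem mem_spectrum_Hu_of_recurrence {V : ℕ → ℂ} {μ : ℂ} (hn : 0 < n) (h0 : V 0 = 0)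
    (h1 : V 1 ≠ 0) (hend : V (n + 1) = 0)
    (hV : ∀ i : Fin n,
      t * (V i + V (i + 2)) + Hu n m t zm zmb i i * V (i + 1) = μ * V (i + 1)) :
    μ ∈ spectrum ℂ (Hu n m t zm zmb) := by
  refine Matrix.mem_spectrum_of_mulVec_eq_smul (v := fun j : Fin n => V (j + 1)) ?_ ?_
  · exact fun h => h1 (congrFun h ⟨0, hn⟩)
  · ext i
    rw [Hu_mulVec V h0 hend, hV, Pi.smul_apply, smul_eq_mul]

end Chain

section Sine

noncomputable def sineSeq (θ : ℝ) (j : ℕ) : ℂ := (Real.sin (θ * j) : ℂ)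

noncomputable def kinkedSineSeq (θ : ℝ) (p j : ℕ) : ℂ :=
  if p ≤ j then sineSeq θ (j - p) else 0

variable {θ : ℝ}

@[simp] theorem sineSeq_zero : sineSeq θ 0 = 0 := by simp [sineSeq]

@[simp] theorem sineSeq_one : sineSeq θ 1 = Real.sin θ := by simp [sineSeq]

theorem sineSeq_add_sineSeq_add_two (j : ℕ) :
    sineSeq θ j + sineSeq θ (j + 2) = 2 * Real.cos θ * sineSeq θ (j + 1) := by
  have h : θ * (j : ℝ) = θ * (j + 1 : ℕ) - θ ∧ θ * (j + 2 : ℕ) = θ * (j + 1 : ℕ) + θ := by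
    constructor <;> push_cast <;> ring
  simp only [sineSeq, h.1, h.2, Real.sin_sub, Real.sin_add]
  push_cast
  ring

theorem sineSeq_sub_of_sineSeq_eq_zero {N a : ℕ} (hN : sineSeq θ N = 0) (ha : a ≤ N) :
    sineSeq θ (N - a) = -Real.cos (θ * N) * sineSeq θ a := by
  have hN' : Real.sin (θ * N) = 0 := Complex.ofReal_eq_zero.mp hN
  simp only [sineSeq, Nat.cast_sub ha, mul_sub, Real.sin_sub, hN']
  push_cast
  ring

theorem sineSeq_pi_mul_div_eq_zero_of_dvd {k g M : ℕ} (h : g ∣ M) :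
    sineSeq (Real.pi * k / g) M = 0 := by
  obtain ⟨q, rfl⟩ := h
  rcases eq_or_ne g 0 with rfl | hg
  · simp
  · have : Real.pi * k / g * (g * q : ℕ) = (k * q : ℕ) * Real.pi := by
      push_cast
      field_simp
    rw [sineSeq, this, Real.sin_nat_mul_pi, Complex.ofReal_zero]

theorem kinkedSineSeq_of_le {p j : ℕ} (h : p ≤ j) : kinkedSineSeq θ p j = sineSeq θ (j - p) :=
  if_pos h

theorem kinkedSineSeq_eq_zero_of_le {p j : ℕ} (h : j ≤ p) : kinkedSineSeq θ p j = 0 := by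
  rcases h.lt_or_eq with h | rfl
  · exact if_neg (by omega)
  · simp [kinkedSineSeq]

theorem kinkedSineSeq_add_kinkedSineSeq_add_two (p j : ℕ) :
    kinkedSineSeq θ p j + kinkedSineSeq θ p (j + 2) =
      2 * Real.cos θ * kinkedSineSeq θ p (j + 1) + if j + 1 = p then (Real.sin θ : ℂ) else 0 := by
  rcases le_or_gt p j with h | h
  · have := sineSeq_add_sineSeq_add_two (θ := θ) (j - p)
    rw [show j - p + 2 = j + 2 - p by omega, show j - p + 1 = j + 1 - p by omega] at this
    rw [kinkedSineSeq_of_le h, kinkedSineSeq_of_le (by omega), kinkedSineSeq_of_le (by omega),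
      if_neg (by omega), this, add_zero]
  · rw [kinkedSineSeq_eq_zero_of_le h.le, kinkedSineSeq_eq_zero_of_le h]
    rcases (Nat.succ_le_of_lt h).lt_or_eq with h' | h'
    · rw [kinkedSineSeq_eq_zero_of_le h', if_neg h'.ne]
      simp
    · rw [kinkedSineSeq_of_le (by omega), if_pos h', show j + 2 - p = 1 by omega]
      simp

end Sine

theorem sin_pi_mul_div_ne_zero {k g : ℕ} (hk : 0 < k) (hkg : k < g) :
    Real.sin (Real.pi * k / g) ≠ 0 := by
  have hg : (0 : ℝ) < g := by exact_mod_cast hk.trans hkg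
  have hk' : (0 : ℝ) < k := by exact_mod_cast hk
  refine (Real.sin_pos_of_pos_of_lt_pi (by positivity) ?_).ne'
  rw [mul_div_assoc]
  exact mul_lt_of_lt_one_right Real.pi_pos ((div_lt_one hg).mpr (Nat.cast_lt.mpr hkg))

section Eigenvalues

variable {n m : ℕ} {t θ : ℝ}

theorem mem_spectrum_Hu_of_sineSeq_eq_zero {zm zmb : ℂ} (hn : 0 < n) (hmn : m ≤ n + 1)
    (hθ : Real.sin θ ≠ 0) (hend : sineSeq θ (n + 1) = 0) (hm : sineSeq θ m = 0) :
    ((2 * t * Real.cos θ : ℝ) : ℂ) ∈ spectrum ℂ (Hu n m t zm zmb) := by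
  have hmb : sineSeq θ (n + 1 - m) = 0 := by
    rw [sineSeq_sub_of_sineSeq_eq_zero hend hmn, hm, mul_zero]
  refine mem_spectrum_Hu_of_recurrence hn sineSeq_zero (by rw [sineSeq_one]; exact_mod_cast hθ) hend
    fun i => ?_
  have hpot : Hu n m t zm zmb i i * sineSeq θ (i + 1) = 0 := by
    rw [Hu_apply_self]
    split_ifs with h h'
    · rw [h, hm, mul_zero]
    · rw [h', hmb, mul_zero]
    · rw [zero_mul]
  rw [hpot, add_zero, sineSeq_add_sineSeq_add_two]
  push_cast
  ring

theorem mem_spectrum_Hu_neg_of_sineSeq_two_mul_eq_zero (z : ℂ) (ht : t ≠ 0) (hm : 1 ≤ m)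
    (hmn : 2 * m ≤ n) (hθ : Real.sin θ ≠ 0) (hend : sineSeq θ (n + 1) = 0)
    (h2m : sineSeq θ (2 * m) = 0) :
    ((2 * t * Real.cos θ : ℝ) : ℂ) ∈ spectrum ℂ (Hu n m t z (-z)) := by
  set mb := n + 1 - m with hmb_def
  set ε : ℂ := (Real.cos (θ * (n + 1 : ℕ)) : ℂ)
  have hts : (t : ℂ) * Real.sin θ ≠ 0 :=
    mul_ne_zero (by exact_mod_cast ht) (by exact_mod_cast hθ)
  set c : ℂ := -z * sineSeq θ m / (t * Real.sin θ)
  have hc : t * Real.sin θ * c = -z * sineSeq θ m := mul_div_cancel₀ _ hts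
  set W : ℕ → ℂ := fun j => sineSeq θ j + c * (kinkedSineSeq θ m j + ε * kinkedSineSeq θ mb j)
  have hSmb : sineSeq θ mb = -ε * sineSeq θ m := sineSeq_sub_of_sineSeq_eq_zero hend (by omega)
  have hWm : W m = sineSeq θ m := by
    simp only [W, kinkedSineSeq_eq_zero_of_le le_rfl,
      kinkedSineSeq_eq_zero_of_le (by omega : m ≤ mb)]
    ring
  have hWmb : W mb = -ε * sineSeq θ m := by
    have : sineSeq θ (mb - m) = 0 := by
      rw [show mb - m = n + 1 - 2 * m by omega, sineSeq_sub_of_sineSeq_eq_zero hend (by omega),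
        h2m, mul_zero]
    simp only [W, kinkedSineSeq_eq_zero_of_le le_rfl, kinkedSineSeq_of_le (by omega : m ≤ mb),
      this, hSmb]
    ring
  refine mem_spectrum_Hu_of_recurrence (V := W) (by omega) ?_ ?_ ?_ fun i => ?_
  · simp [W, kinkedSineSeq_eq_zero_of_le (Nat.zero_le _)]
  · simp only [W, kinkedSineSeq_eq_zero_of_le hm,
      kinkedSineSeq_eq_zero_of_le (by omega : 1 ≤ mb), sineSeq_one, mul_zero, add_zero]
    exact_mod_cast hθ
  · simp only [W, hend, kinkedSineSeq_of_le (by omega : m ≤ n + 1),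
      kinkedSineSeq_of_le (by omega : mb ≤ n + 1), ← hmb_def, show n + 1 - mb = m by omega,
      hSmb]
    ring
  · have hrec : t * (W i + W (i + 2)) = 2 * t * Real.cos θ * W (i + 1) + t * c *
        ((if (i : ℕ) + 1 = m then (Real.sin θ : ℂ) else 0) +
          ε * if (i : ℕ) + 1 = mb then (Real.sin θ : ℂ) else 0) := by
      simp only [W]
      linear_combination (t : ℂ) * (sineSeq_add_sineSeq_add_two (θ := θ) i +
        c * kinkedSineSeq_add_kinkedSineSeq_add_two (θ := θ) m i +
        c * ε * kinkedSineSeq_add_kinkedSineSeq_add_two (θ := θ) mb i)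
    rw [hrec, Hu_apply_self, ← hmb_def,
      show ((2 * t * Real.cos θ : ℝ) : ℂ) = 2 * t * Real.cos θ by norm_cast]
    by_cases h : (i : ℕ) + 1 = m
    · simp only [if_pos h, if_neg (show (i : ℕ) + 1 ≠ mb by omega)]
      rw [h, hWm]
      linear_combination hc
    by_cases h' : (i : ℕ) + 1 = mb
    · simp only [if_neg h, if_pos h']
      rw [h', hWmb]
      linear_combination ε * hc
    · simp only [if_neg h, if_neg h']
      ring

end Eigenvalues

theorem stmt13 (n m : ℕ) (hm : 1 ≤ m) (hmn : 2*m ≤ n)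
    (t : ℝ) (ht : 0 < t) :
    (∀ zm zmb : ℂ, ∀ k : ℕ, 1 ≤ k → k ≤ Nat.gcd m (n + 1) - 1 →
      ((2 * t * Real.cos (Real.pi * k / (Nat.gcd m (n + 1))) : ℝ) : ℂ)
        ∈ spectrum ℂ (Hu n m t zm zmb)) ∧
    (∀ zm : ℂ, ∀ k : ℕ, 1 ≤ k → k ≤ Nat.gcd (2*m) (n + 1) - 1 →
      ((2 * t * Real.cos (Real.pi * k / (Nat.gcd (2*m) (n + 1))) : ℝ) : ℂ)
        ∈ spectrum ℂ (Hu n m t zm (-zm))) := by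
  refine ⟨fun zm zmb k hk hkg => ?_, fun zm k hk hkg => ?_⟩
  · exact mem_spectrum_Hu_of_sineSeq_eq_zero (by omega) (by omega)
      (sin_pi_mul_div_ne_zero hk (by omega))
      (sineSeq_pi_mul_div_eq_zero_of_dvd (Nat.gcd_dvd_right _ _))
      (sineSeq_pi_mul_div_eq_zero_of_dvd (Nat.gcd_dvd_left _ _))
  · exact mem_spectrum_Hu_neg_of_sineSeq_two_mul_eq_zero zm ht.ne' hm hmn
      (sin_pi_mul_div_ne_zero hk (by omega))
      (sineSeq_pi_mul_div_eq_zero_of_dvd (Nat.gcd_dvd_right _ _))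
      (sineSeq_pi_mul_div_eq_zero_of_dvd (Nat.gcd_dvd_left _ _))
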